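/- Let G(x,y) = Σ_{n,k ≥ 0} g_{n,k} y^k x^n where g_{n,k} is the number of Dyck paths of semilength n with exactly k up steps at height h ≡ 0 (mod 3). Then G satisfies the algebraic equation x·y·(1-x)·G² - (1 - 2x + x·y)·G + (1-x) = 0 (as an identity of formal power series). -/

import Mathlib

/-!
Write `A_c(x, y)` for the generating function of Dyck paths by semilength and number of up steps
at height `≡ c (mod 3)`, so that `G = A_0`. In the first-return decomposition `p = U q D r` the
initial `U` is at height `1`, every step of `q` is raised by one and the steps of `r` keep their
heights; hence `A_c = 1 + x y^[c = 1] A_{c-1} A_c`. Eliminating `A_1` and `A_2` from these three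
equations leaves the quadratic equation for `A_0`. The decomposition is the root
decomposition of binary trees, transported along their bijection with Dyck words.
-/

/-- A Dyck path of semilength `n`, encoded as a list of booleans where
`true` is an up step `(1,1)` and `false` is a down step `(1,-1)`;
the path never goes below the x-axis. -/
def IsDyckPath (n : ℕ) (p : List Bool) : Prop :=
  p.length = 2 * n ∧ p.count true = n ∧
  ∀ i, (p.take i).count false ≤ (p.take i).count true

/-- The height of the `i`-th step: the y-coordinate reached after step `i`.
For an up step this is the height `h` such that the step rises from `y = h-1` to `y = h`. -/
def stepHeight (p : List Bool) (i : ℕ) : ℕ :=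
  (p.take (i + 1)).count true - (p.take (i + 1)).count false

/-- The number of up steps of `p` at height `h` with `h ≡ c (mod m)`. -/
def upStepsMod (m c : ℕ) (p : List Bool) : ℕ :=
  ((Finset.range p.length).filter
    (fun i => p.getD i false = true ∧ stepHeight p i % m = c)).card


open MvPowerSeries in
/-- `G(x,y) = Σ g_{n,k} y^k x^n` where `g_{n,k}` is the number of Dyck paths of
semilength `n` with exactly `k` up steps at height `h ≡ 0 (mod 3)`;
`X 0` plays the role of `x` and `X 1` plays the role of `y`. -/
noncomputable def G : MvPowerSeries (Fin 2) ℚ :=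
  fun d => (Nat.card {p : List Bool // IsDyckPath (d 0) p ∧ upStepsMod 3 0 p = d 1} : ℚ)


open Finset

section Fibers

variable {M α β : Type*} [AddMonoid M] [HasAntidiagonal M]

def fiberAddEquiv (f : α → M) (g : β → M) (d : M) :
    {x : α × β // f x.1 + g x.2 = d} ≃
      Σ uv : antidiagonal d, {a // f a = uv.1.1} × {b // g b = uv.1.2} where
  toFun x := ⟨⟨(f x.1.1, g x.1.2), mem_antidiagonal.2 x.2⟩, ⟨x.1.1, rfl⟩, ⟨x.1.2, rfl⟩⟩
  invFun y := ⟨(y.2.1, y.2.2), by rw [y.2.1.2, y.2.2.2]; exact mem_antidiagonal.1 y.1.2⟩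
  left_inv _ := rfl
  right_inv := by
    rintro ⟨⟨⟨u, v⟩, h⟩, ⟨a, ha⟩, ⟨b, hb⟩⟩
    dsimp only at ha hb
    subst ha hb
    rfl

theorem finite_fiber_add {f : α → M} {g : β → M}
    (hf : ∀ d, Finite {a // f a = d}) (hg : ∀ d, Finite {b // g b = d}) (d : M) :
    Finite {x : α × β // f x.1 + g x.2 = d} :=
  .of_equiv _ (fiberAddEquiv f g d).symm

end Fibers

def BinaryTree.equivUnitSumProd (α : Type*) :
    BinaryTree α ≃ Unit ⊕ α × BinaryTree α × BinaryTree α where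
  toFun
    | .nil => .inl ()
    | .node a l r => .inr (a, l, r)
  invFun
    | .inl () => .nil
    | .inr (a, l, r) => .node a l r
  left_inv t := by cases t <;> rfl
  right_inv x := by rcases x with _ | ⟨a, l, r⟩ <;> rfl

namespace MvPowerSeries

variable {σ α β : Type*} {R : Type*} [Semiring R]

variable (R) in
noncomputable def countingSeries (deg : α → σ →₀ ℕ) : MvPowerSeries σ R :=
  fun d => Nat.card {a // deg a = d}

theorem coeff_countingSeries (deg : α → σ →₀ ℕ) (d : σ →₀ ℕ) :
    coeff d (countingSeries R deg) = Nat.card {a // deg a = d} := rfl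

theorem countingSeries_congr {f : α → σ →₀ ℕ} {g : β → σ →₀ ℕ} (e : α ≃ β)
    (h : ∀ a, g (e a) = f a) : countingSeries R f = countingSeries R g := by
  ext d
  simp only [coeff_countingSeries,
    Nat.card_congr (e.subtypeEquiv fun a => by rw [h] : {a // f a = d} ≃ {b // g b = d})]

theorem countingSeries_sumElim {f : α → σ →₀ ℕ} {g : β → σ →₀ ℕ}
    (hf : ∀ d, Finite {a // f a = d}) (hg : ∀ d, Finite {b // g b = d}) :
    countingSeries R (Sum.elim f g) = countingSeries R f + countingSeries R g := by
  ext d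
  simp only [map_add, coeff_countingSeries, Nat.card_congr Equiv.subtypeSum, Sum.elim_inl,
    Sum.elim_inr, Nat.card_sum, Nat.cast_add]

variable [DecidableEq σ]

theorem countingSeries_const (e : σ →₀ ℕ) :
    countingSeries R (fun _ : Unit => e) = monomial e 1 := by
  ext d
  rw [coeff_countingSeries, coeff_monomial]
  split_ifs with h
  · simp [h]
  · simp [Ne.symm h]

theorem countingSeries_add {f : α → σ →₀ ℕ} {g : β → σ →₀ ℕ}
    (hf : ∀ d, Finite {a // f a = d}) (hg : ∀ d, Finite {b // g b = d}) :
    countingSeries R (fun x : α × β => f x.1 + g x.2) =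
      countingSeries R f * countingSeries R g := by
  ext d
  rw [coeff_mul, ← Finset.sum_coe_sort, coeff_countingSeries,
    Nat.card_congr (fiberAddEquiv f g d), Nat.card_sigma]
  simp only [Nat.card_prod, Nat.cast_sum, Nat.cast_mul, coeff_countingSeries]

theorem countingSeries_binaryTree {γ : Type*} {deg deg₁ deg₂ : BinaryTree γ → σ →₀ ℕ}
    {w : γ → σ →₀ ℕ} (hw : ∀ d, Finite {a // w a = d}) (h₁ : ∀ d, Finite {t // deg₁ t = d})
    (h₂ : ∀ d, Finite {t // deg₂ t = d}) (hnil : deg .nil = 0)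
    (hnode : ∀ a l r, deg (.node a l r) = w a + (deg₁ l + deg₂ r)) :
    countingSeries R deg =
      1 + countingSeries R w * (countingSeries R deg₁ * countingSeries R deg₂) := by
  have h₁₂ := finite_fiber_add h₁ h₂
  calc countingSeries R deg
      = countingSeries R (Sum.elim (fun _ : Unit => 0)
          fun x : γ × BinaryTree γ × BinaryTree γ => w x.1 + (deg₁ x.2.1 + deg₂ x.2.2)) :=
        countingSeries_congr (BinaryTree.equivUnitSumProd γ) fun t => by
          cases t
          · exact hnil.symm
          · exact (hnode _ _ _).symm
    _ = 1 + countingSeries R w * (countingSeries R deg₁ * countingSeries R deg₂) := by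
        rw [countingSeries_sumElim (fun _ => Subtype.finite) (finite_fiber_add hw h₁₂),
          countingSeries_add hw h₁₂, countingSeries_add h₁ h₂, countingSeries_const,
          monomial_zero_one]

theorem monomial_single_zero_add_single_one (a b : ℕ) :
    monomial (Finsupp.single 0 a + Finsupp.single 1 b) (1 : R) =
      (X 0 : MvPowerSeries (Fin 2) R) ^ a * X 1 ^ b := by
  rw [X_pow_eq, X_pow_eq, monomial_mul_monomial, one_mul]

end MvPowerSeries

theorem List.count_map_equiv {α β : Type*} [BEq α] [LawfulBEq α] [BEq β] [LawfulBEq β]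
    (e : α ≃ β) (l : List α) (b : β) : (l.map e).count b = l.count (e.symm b) := by
  rw [← List.count_map_of_injective l e e.injective, Equiv.apply_symm_apply]

theorem IsDyckPath.count_false {n : ℕ} {p : List Bool} (hp : IsDyckPath n p) :
    p.count false = n := by
  have := p.count_true_add_count_false
  have := hp.1
  have := hp.2.1
  omega

@[simps]
def boolEquivDyckStep : Bool ≃ DyckStep where
  toFun
    | true => .U
    | false => .D
  invFun
    | .U => true
    | .D => false
  left_inv b := by cases b <;> rfl
  right_inv s := by cases s <;> rfl

namespace BinaryTree

open DyckWord

def dyckPath (t : BinaryTree Unit) : List Bool :=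
  (ofTree t).toList.map boolEquivDyckStep.symm

theorem dyckPath_nil : dyckPath nil = [] := rfl

theorem dyckPath_node (a : Unit) (l r : BinaryTree Unit) :
    (node a l r).dyckPath = true :: l.dyckPath ++ false :: r.dyckPath := by
  change List.map _ ((ofTree l).nest.toList ++ (ofTree r).toList) = _
  simp [nest, dyckPath]

theorem isDyckPath_dyckPath (t : BinaryTree Unit) : IsDyckPath t.numNodes t.dyckPath := by
  have hn : t.numNodes = (ofTree t).semilength := by
    rw [← numNodes_toTree, toTree_ofTree]
  refine ⟨?_, ?_, fun i => ?_⟩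
  · rw [dyckPath, List.length_map, hn, two_mul_semilength_eq_length]
  · rw [dyckPath, List.count_map_equiv, hn]
    rfl
  · rw [dyckPath, ← List.map_take, List.count_map_equiv, List.count_map_equiv]
    exact (ofTree t).count_D_le_count_U i

theorem dyckPath_injective : Function.Injective dyckPath := fun _ _ h =>
  equivTree.symm.injective <|
    DyckWord.ext (List.map_injective_iff.2 boolEquivDyckStep.symm.injective h)

theorem exists_dyckPath_eq {n : ℕ} {p : List Bool} (hp : IsDyckPath n p) :
    ∃ t : BinaryTree Unit, t.dyckPath = p := by
  let w : DyckWord :=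
    { toList := p.map boolEquivDyckStep
      count_U_eq_count_D := by
        rw [List.count_map_equiv, List.count_map_equiv]
        exact hp.2.1.trans hp.count_false.symm
      count_D_le_count_U i := by
        rw [← List.map_take, List.count_map_equiv, List.count_map_equiv]
        exact hp.2.2 i }
  refine ⟨w.toTree, ?_⟩
  rw [dyckPath, ofTree_toTree, List.map_map, Equiv.symm_comp_self, List.map_id]

end BinaryTree

-- `(c + m - 1) % m` is `c - 1` modulo `m`, without truncated subtraction at `c = 0`.
theorem Nat.add_one_mod_eq_iff {h c m : ℕ} (hc : c < m) :
    (h + 1) % m = c ↔ h % m = (c + m - 1) % m :=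
  calc (h + 1) % m = c ↔ (h + 1) % m = (c + m - 1 + 1) % m := by
        rw [show c + m - 1 + 1 = c + m by omega, Nat.add_mod_right, Nat.mod_eq_of_lt hc]
    _ ↔ h % m = (c + m - 1) % m := ⟨Nat.ModEq.add_right_cancel' 1, Nat.ModEq.add_right 1⟩

theorem List.sum_range_take_succ_append {α M : Type*} [AddCommMonoid M] (f : List α → M)
    (u v : List α) :
    ∑ i ∈ Finset.range (u ++ v).length, f ((u ++ v).take (i + 1)) =
      ∑ i ∈ Finset.range u.length, f (u.take (i + 1)) +
        ∑ j ∈ Finset.range v.length, f (u ++ v.take (j + 1)) := by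
  rw [List.length_append, Finset.sum_range_add]
  congr 1
  · refine Finset.sum_congr rfl fun i hi => ?_
    rw [List.take_append_of_le_length (Finset.mem_range.1 hi)]
  · refine Finset.sum_congr rfl fun j _ => ?_
    rw [List.take_append, List.take_of_length_le (by omega), Nat.add_assoc,
      Nat.add_sub_cancel_left]

def EndsWithUpStepMod (m c : ℕ) (s : List Bool) : Prop :=
  s.getLast? = some true ∧ (s.count true - s.count false) % m = c

instance (m c : ℕ) : DecidablePred (EndsWithUpStepMod m c) :=
  fun _ => inferInstanceAs (Decidable (_ ∧ _))

theorem upStepsMod_eq_sum (m c : ℕ) (p : List Bool) :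
    upStepsMod m c p =
      ∑ i ∈ range p.length, if EndsWithUpStepMod m c (p.take (i + 1)) then 1 else 0 := by
  rw [upStepsMod, Finset.card_filter]
  refine Finset.sum_congr rfl fun i hi => ?_
  have hlast : (p.take (i + 1)).getLast? = some (p.getD i false) := by
    simp [List.getLast?_take, List.getElem?_eq_getElem (Finset.mem_range.1 hi)]
  simp only [EndsWithUpStepMod, hlast, Option.some.injEq, stepHeight]
  congr

theorem endsWithUpStepMod_cons_true {m c : ℕ} (hc : c < m) {s : List Bool} (hs : s ≠ [])
    (hprefix : s.count false ≤ s.count true) :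
    EndsWithUpStepMod m c (true :: s) ↔ EndsWithUpStepMod m ((c + m - 1) % m) s := by
  have hlast : (true :: s).getLast? = s.getLast? := by
    rw [List.getLast?_cons, List.getLast?_eq_some_getLast hs, Option.getD_some]
  have hheight : (true :: s).count true - (true :: s).count false =
      s.count true - s.count false + 1 := by
    simp only [List.count_cons_self, List.count_cons, beq_iff_eq, Bool.true_eq_false, if_false]
    omega
  rw [EndsWithUpStepMod, EndsWithUpStepMod, hlast, hheight, Nat.add_one_mod_eq_iff hc]

theorem endsWithUpStepMod_append_of_count_eq {m c : ℕ} {u s : List Bool} (hs : s ≠ [])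
    (hu : u.count true = u.count false) :
    EndsWithUpStepMod m c (u ++ s) ↔ EndsWithUpStepMod m c s := by
  rw [EndsWithUpStepMod, EndsWithUpStepMod, List.getLast?_append,
    List.getLast?_eq_some_getLast hs, List.count_append, List.count_append, hu,
    Nat.add_sub_add_left]
  rfl

theorem upStepsMod_cons_append_cons {m c n : ℕ} (hc : c < m) {q : List Bool}
    (hq : IsDyckPath n q) (r : List Bool) :
    upStepsMod m c (true :: q ++ false :: r) =
      (if 1 % m = c then 1 else 0) + upStepsMod m ((c + m - 1) % m) q + upStepsMod m c r := by
  have hne {l : List Bool} {j : ℕ} (hj : j ∈ range l.length) : l.take (j + 1) ≠ [] :=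
    List.ne_nil_of_length_pos (by simp at hj ⊢; omega)
  have hbalanced :
      ([true] ++ q ++ [false]).count true = ([true] ++ q ++ [false]).count false := by
    simp [hq.2.1, hq.count_false]
  have hdown : ¬ EndsWithUpStepMod m c ([true] ++ q ++ [false]) := by
    rintro ⟨hlast, -⟩
    rw [List.getLast?_append] at hlast
    simp at hlast
  have hsum := List.sum_range_take_succ_append (fun s => if EndsWithUpStepMod m c s then 1 else 0)
  rw [show true :: q ++ false :: r = [true] ++ q ++ [false] ++ r by simp, upStepsMod_eq_sum,
    hsum, hsum, hsum, upStepsMod_eq_sum, upStepsMod_eq_sum]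
  simp only [List.length_singleton, Finset.sum_range_one, zero_add, List.take_one,
    List.head?_cons, Option.toList_some, hdown, if_false, add_zero]
  congr 1
  · congr 1
    · simp [EndsWithUpStepMod]
    · refine Finset.sum_congr rfl fun j hj => ?_
      exact if_congr (endsWithUpStepMod_cons_true hc (hne hj) (hq.2.2 (j + 1))) rfl rfl
  · refine Finset.sum_congr rfl fun j hj => ?_
    exact if_congr (endsWithUpStepMod_append_of_count_eq (hne hj) hbalanced) rfl rfl

section DyckDegree

open MvPowerSeries BinaryTree

theorem Finsupp.single_zero_add_single_one_eq_iff {a b : ℕ} {d : Fin 2 →₀ ℕ} :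
    single 0 a + single 1 b = d ↔ a = d 0 ∧ b = d 1 := by
  constructor
  · rintro rfl
    simp
  · rintro ⟨rfl, rfl⟩
    ext i
    fin_cases i <;> simp

noncomputable def dyckDegree (m c : ℕ) (t : BinaryTree Unit) : Fin 2 →₀ ℕ :=
  Finsupp.single 0 t.numNodes + Finsupp.single 1 (upStepsMod m c t.dyckPath)

theorem finite_dyckDegree_fiber (m c : ℕ) (d : Fin 2 →₀ ℕ) :
    Finite {t // dyckDegree m c t = d} :=
  .of_injective
    (fun t => (⟨t.1, mem_treesOfNumNodesEq.2
      (Finsupp.single_zero_add_single_one_eq_iff.1 t.2).1⟩ : treesOfNumNodesEq (d 0)))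
    fun _ _ h => Subtype.ext (congrArg (fun t : treesOfNumNodesEq (d 0) => t.1) h)

theorem card_dyckDegree_fiber (m c : ℕ) (d : Fin 2 →₀ ℕ) :
    Nat.card {t // dyckDegree m c t = d} =
      Nat.card {p : List Bool // IsDyckPath (d 0) p ∧ upStepsMod m c p = d 1} := by
  refine Nat.card_congr (.ofBijective (fun t => ⟨t.1.dyckPath, ?_⟩) ⟨?_, ?_⟩)
  · obtain ⟨hn, hk⟩ := Finsupp.single_zero_add_single_one_eq_iff.1 t.2
    exact ⟨hn ▸ isDyckPath_dyckPath _, hk⟩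
  · exact fun _ _ h => Subtype.ext (dyckPath_injective (congrArg Subtype.val h))
  · rintro ⟨p, hp, hk⟩
    obtain ⟨t, rfl⟩ := exists_dyckPath_eq hp
    have hn : t.numNodes = d 0 := (isDyckPath_dyckPath t).2.1.symm.trans hp.2.1
    exact ⟨⟨t, Finsupp.single_zero_add_single_one_eq_iff.2 ⟨hn, hk⟩⟩, rfl⟩

theorem dyckDegree_nil (m c : ℕ) : dyckDegree m c nil = 0 := by
  simp [dyckDegree, dyckPath_nil, upStepsMod]

theorem dyckDegree_node {m c : ℕ} (hc : c < m) (a : Unit) (l r : BinaryTree Unit) :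
    dyckDegree m c (node a l r) =
      (Finsupp.single 0 1 + Finsupp.single (1 : Fin 2) (if 1 % m = c then 1 else 0)) +
        (dyckDegree m ((c + m - 1) % m) l + dyckDegree m c r) := by
  rw [dyckDegree, dyckDegree, dyckDegree, dyckPath_node,
    upStepsMod_cons_append_cons hc (isDyckPath_dyckPath l), numNodes]
  simp only [Finsupp.single_add]
  abel

theorem countingSeries_dyckDegree {R : Type*} [Semiring R] {m c : ℕ} (hc : c < m) :
    countingSeries R (dyckDegree m c) =
      1 + X 0 * X 1 ^ (if 1 % m = c then 1 else 0) *
        (countingSeries R (dyckDegree m ((c + m - 1) % m)) *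
          countingSeries R (dyckDegree m c)) := by
  refine (countingSeries_binaryTree (fun _ => Subtype.finite) (finite_dyckDegree_fiber _ _)
    (finite_dyckDegree_fiber _ _) (dyckDegree_nil m c) (dyckDegree_node hc)).trans ?_
  rw [countingSeries_const, monomial_single_zero_add_single_one, pow_one]

end DyckDegree

open MvPowerSeries in
/-- `G` satisfies `x·y·(1-x)·G² - (1 - 2x + x·y)·G + (1-x) = 0`. -/
theorem G_algebraic_equation :
    (X 0 : MvPowerSeries (Fin 2) ℚ) * X 1 * (1 - X 0) * G ^ 2
      - (1 - 2 * X 0 + X 0 * X 1) * G + (1 - X 0) = 0 := by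
  have hG : G = countingSeries ℚ (dyckDegree 3 0) := by
    ext d
    exact congrArg Nat.cast (card_dyckDegree_fiber 3 0 d).symm
  have h₀ := countingSeries_dyckDegree (R := ℚ) (m := 3) (c := 0) (by norm_num)
  have h₁ := countingSeries_dyckDegree (R := ℚ) (m := 3) (c := 1) (by norm_num)
  have h₂ := countingSeries_dyckDegree (R := ℚ) (m := 3) (c := 2) (by norm_num)
  norm_num at h₀ h₁ h₂
  rw [hG]
  set A₀ := countingSeries ℚ (dyckDegree 3 0)
  set A₂ := countingSeries ℚ (dyckDegree 3 2)
  linear_combination (-(1 - X 0 - X 0 * X 1 * A₀)) * h₀ - X 0 ^ 2 * A₀ * A₂ * h₁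
    - X 0 * A₀ * (1 - X 0 * X 1 * A₀) * h₂
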